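/- Let S, T, Z be closed subspaces of a complex Hilbert space H such that Z ∔ S = H and Z ∔ T = H (i.e., Z is a common complement of S and T). Then there exist invertible operators G, K ∈ B(H) with G(Z) = Z, K(Z) = Z, G(Z^⊥) = S and K(Z^⊥) = T. (This asserts the surjectivity of the map 𝔭(Z, G, K) = (G(Z^⊥), K(Z^⊥)) onto the set Δ of pairs of closed subspaces admitting a common complement.) -/

import Mathlib

/-!
If `Z` is a topological complement of both `W` and `S`, write `P_A^B` for the projection onto `A`
along `B`. The operator `P_Z^W + P_S^Z` is the identity on `Z` and acts on `W` as `P_S^Z`. The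
same recipe with `W` and `S` exchanged inverts it, since a projection along `Z` only sees an
element modulo `Z`. Both maps are continuous, so this is an invertible operator fixing `Z` and
carrying `W` onto `S`; in a Hilbert space take `W = Zᗮ`, and closed algebraic complements are
topological ones by the open mapping theorem.
-/

namespace Submodule

section Algebraic

variable {R E : Type*} [Ring R] [AddCommGroup E] [Module R E]

theorem projection_projection_of_isCompl {p q r : Submodule R E} (hp : IsCompl p r)
    (hq : IsCompl q r) (x : E) : p.projection r hp (q.projection r hq x) = p.projection r hp x := by
  rw [← sub_eq_zero, ← map_sub, projection_apply_eq_zero_iff, sub_mem_comm_iff]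
  exact sub_projection_mem hq x

variable {Z W S : Submodule R E}

noncomputable def transferCompl (hW : IsCompl Z W) (hS : IsCompl Z S) : E →ₗ[R] E :=
  Z.projection W hW + S.projection Z hS.symm

theorem transferCompl_apply (hW : IsCompl Z W) (hS : IsCompl Z S) (x : E) :
    transferCompl hW hS x = Z.projection W hW x + S.projection Z hS.symm x := rfl

theorem transferCompl_apply_of_mem_left (hW : IsCompl Z W) (hS : IsCompl Z S) {z : E}
    (hz : z ∈ Z) : transferCompl hW hS z = z := by
  rw [transferCompl_apply, projection_apply_of_mem_left hW hz,
    (projection_apply_eq_zero_iff hS.symm).2 hz, add_zero]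

theorem transferCompl_apply_mem (hW : IsCompl Z W) (hS : IsCompl Z S) {w : E}
    (hw : w ∈ W) : transferCompl hW hS w ∈ S := by
  rw [transferCompl_apply, (projection_apply_eq_zero_iff hW).2 hw, zero_add]
  exact projection_apply_mem hS.symm w

theorem transferCompl_transferCompl (hW : IsCompl Z W) (hS : IsCompl Z S) (x : E) :
    transferCompl hS hW (transferCompl hW hS x) = x := by
  rw [transferCompl_apply, transferCompl_apply, map_add, map_add,
    projection_apply_of_mem_left hS (projection_apply_mem hW x),
    (projection_apply_eq_zero_iff hS).2 (projection_apply_mem hS.symm x), add_zero,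
    (projection_apply_eq_zero_iff hW.symm).2 (projection_apply_mem hW x), zero_add,
    projection_projection_of_isCompl, projection_add_projection_eq_self]

noncomputable def transferComplEquiv (hW : IsCompl Z W) (hS : IsCompl Z S) : E ≃ₗ[R] E :=
  { transferCompl hW hS with
    invFun := transferCompl hS hW
    left_inv := transferCompl_transferCompl hW hS
    right_inv := transferCompl_transferCompl hS hW }

theorem map_transferComplEquiv_left (hW : IsCompl Z W) (hS : IsCompl Z S) :
    Z.map (transferComplEquiv hW hS : E →ₗ[R] E) = Z := by
  have hfix : ∀ z ∈ Z, transferComplEquiv hW hS z = z := fun _ ↦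
    transferCompl_apply_of_mem_left hW hS
  refine le_antisymm (map_le_iff_le_comap.2 fun z hz ↦ ?_) fun z hz ↦ ⟨z, hz, hfix z hz⟩
  simpa [hfix z hz] using hz

theorem map_transferComplEquiv_right (hW : IsCompl Z W) (hS : IsCompl Z S) :
    W.map (transferComplEquiv hW hS : E →ₗ[R] E) = S := by
  refine le_antisymm (map_le_iff_le_comap.2 fun w hw ↦ transferCompl_apply_mem hW hS hw) ?_
  exact fun s hs ↦ (mem_map_equiv _).2 (transferCompl_apply_mem hS hW hs)

end Algebraic

section Topological

variable {R E : Type*} [Ring R] [TopologicalSpace E] [AddCommGroup E] [IsTopologicalAddGroup E]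
  [Module R E] {Z W S : Submodule R E}

theorem continuous_transferCompl (hW : IsTopCompl Z W) (hS : IsTopCompl Z S) :
    Continuous (transferCompl hW.isCompl hS.isCompl) :=
  hW.continuous_projection.add hS.symm.continuous_projection

noncomputable def transferComplL (hW : IsTopCompl Z W) (hS : IsTopCompl Z S) : E ≃L[R] E :=
  { transferComplEquiv hW.isCompl hS.isCompl with
    continuous_toFun := continuous_transferCompl hW hS
    continuous_invFun := continuous_transferCompl hS hW }

theorem exists_units_map_eq_self_and_map_eq (hW : IsTopCompl Z W) (hS : IsTopCompl Z S) :
    ∃ G : (E →L[R] E)ˣ,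
      Z.map ((G : E →L[R] E) : E →ₗ[R] E) = Z ∧ W.map ((G : E →L[R] E) : E →ₗ[R] E) = S :=
  ⟨(transferComplL hW hS).toUnit, map_transferComplEquiv_left hW.isCompl hS.isCompl,
    map_transferComplEquiv_right hW.isCompl hS.isCompl⟩

end Topological

end Submodule

open Submodule

theorem exists_GK_onto_common_complement_pair {H : Type*} [NormedAddCommGroup H]
    [InnerProductSpace ℂ H] [CompleteSpace H]
    (S T Z : Submodule ℂ H)
    (hS : IsClosed (S : Set H)) (hT : IsClosed (T : Set H)) (hZ : IsClosed (Z : Set H))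
    (hZS : IsCompl Z S) (hZT : IsCompl Z T) :
    ∃ G K : (H →L[ℂ] H)ˣ,
      Submodule.map ((G : H →L[ℂ] H) : H →ₗ[ℂ] H) Z = Z ∧
      Submodule.map ((K : H →L[ℂ] H) : H →ₗ[ℂ] H) Z = Z ∧
      Submodule.map ((G : H →L[ℂ] H) : H →ₗ[ℂ] H) Zᗮ = S ∧
      Submodule.map ((K : H →L[ℂ] H) : H →ₗ[ℂ] H) Zᗮ = T := by
  have := hZ.completeSpace_coe
  have hZperp : IsTopCompl Z Zᗮ := Z.isTopCompl_orthogonal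
  obtain ⟨G, hGZ, hGS⟩ :=
    exists_units_map_eq_self_and_map_eq hZperp (hZS.isTopCompl_of_isClosed hZ hS)
  obtain ⟨K, hKZ, hKT⟩ :=
    exists_units_map_eq_self_and_map_eq hZperp (hZT.isTopCompl_of_isClosed hZ hT)
  exact ⟨G, K, hGZ, hKZ, hGS, hKT⟩
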